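/- arXiv:2103.02740 — 2 statements merged into one kernel-verified Lean document; each statement's English description precedes it below -/
import Mathlib

section
/- Suppose p, k, q : X × X → ℝ are measurable, positive functions, μ is a probability measure on X × X, and E_μ[(r(p) − r(k))^2] ≤ 2ε where r(p) = p/(p+q) pointwise. Then E_μ|p − k| ≤ sqrt(2ε) · sqrt(E_μ[(max{p,k} + q)^4 / q^2]). -/
/-!
Since `a/(a+c) - b/(b+c) = c (a-b)/((a+c)(b+c))` and `(a+c)(b+c) ≤ (max a b + c)²`, pointwise
`|p - k| ≤ |r(p) - r(k)| · (max p k + q)²/q`; integrating and applying Cauchy–Schwarz to this product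
gives the bound.
-/

open MeasureTheory

theorem integral_abs_mul_le_sqrt_mul_sqrt {α : Type*} [MeasurableSpace α] {μ : Measure α}
    {f g : α → ℝ} (hf : MemLp f 2 μ) (hg : MemLp g 2 μ) :
    ∫ a, |f a * g a| ∂μ ≤ √(∫ a, f a ^ 2 ∂μ) * √(∫ a, g a ^ 2 ∂μ) := by
  have holder := integral_mul_le_Lp_mul_Lq_of_nonneg Real.HolderConjugate.two_two
    (.of_forall fun a => abs_nonneg (f a)) (.of_forall fun a => abs_nonneg (g a))
    (by rw [ENNReal.ofReal_ofNat]; exact hf.abs) (by rw [ENNReal.ofReal_ofNat]; exact hg.abs)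
  simpa [abs_mul, Real.sqrt_eq_rpow] using holder

theorem div_add_sub_div_add {a b c : ℝ} (ha : a + c ≠ 0) (hb : b + c ≠ 0) :
    a / (a + c) - b / (b + c) = c * (a - b) / ((a + c) * (b + c)) := by
  field_simp
  ring

theorem abs_sub_le_abs_div_add_sub_div_add_mul {a b c : ℝ} (ha : 0 < a) (hb : 0 < b) (hc : 0 < c) :
    |a - b| ≤ |(a / (a + c) - b / (b + c)) * ((max a b + c) ^ 2 / c)| := by
  have hprod : (a + c) * (b + c) ≤ (max a b + c) ^ 2 := by
    rw [sq]
    gcongr <;> simp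
  rw [abs_mul, abs_of_pos (by positivity : 0 < (max a b + c) ^ 2 / c),
    div_add_sub_div_add (by positivity) (by positivity), abs_div, abs_mul, abs_of_pos hc,
    abs_of_pos (by positivity : 0 < (a + c) * (b + c)), div_mul_div_comm, le_div_iff₀ (by positivity)]
  calc |a - b| * ((a + c) * (b + c) * c) ≤ |a - b| * ((max a b + c) ^ 2 * c) := by gcongr
    _ = c * |a - b| * (max a b + c) ^ 2 := by ring

theorem tv_type_bound_general {X : Type*} [MeasurableSpace X]
    (μ : Measure (X × X))
    (p k q : X × X → ℝ) (hp : Measurable p) (hk : Measurable k) (hq : Measurable q)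
    (hp_pos : ∀ z, 0 < p z) (hk_pos : ∀ z, 0 < k z) (hq_pos : ∀ z, 0 < q z)
    (ε : ℝ)
    (hrisk_int : Integrable
      (fun z => (p z / (p z + q z) - k z / (k z + q z)) ^ 2) μ)
    (hw_int : Integrable (fun z => (max (p z) (k z) + q z) ^ 4 / (q z) ^ 2) μ)
    (hrisk : ∫ z, (p z / (p z + q z) - k z / (k z + q z)) ^ 2 ∂μ ≤ 2 * ε) :
    ∫ z, |p z - k z| ∂μ
      ≤ Real.sqrt (2 * ε)
        * Real.sqrt (∫ z, (max (p z) (k z) + q z) ^ 4 / (q z) ^ 2 ∂μ) := by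
  have hw_sq : ∀ z, ((max (p z) (k z) + q z) ^ 2 / q z) ^ 2
      = (max (p z) (k z) + q z) ^ 4 / (q z) ^ 2 := fun z => by ring
  have hr : MemLp (fun z => p z / (p z + q z) - k z / (k z + q z)) 2 μ :=
    (memLp_two_iff_integrable_sq (by fun_prop)).2 hrisk_int
  have hw : MemLp (fun z => (max (p z) (k z) + q z) ^ 2 / q z) 2 μ :=
    (memLp_two_iff_integrable_sq (by fun_prop : Measurable _).aestronglyMeasurable).2
      (by simpa only [hw_sq] using hw_int)
  have hpointwise := fun z =>
    abs_sub_le_abs_div_add_sub_div_add_mul (hp_pos z) (hk_pos z) (hq_pos z)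
  have hrw_int := (hr.integrable_mul hw).abs
  calc ∫ z, |p z - k z| ∂μ
      ≤ ∫ z, |(p z / (p z + q z) - k z / (k z + q z)) * ((max (p z) (k z) + q z) ^ 2 / q z)| ∂μ :=
        integral_mono (hrw_int.mono' (by fun_prop) (.of_forall fun z => by simpa using hpointwise z))
          hrw_int hpointwise
    _ ≤ √(∫ z, (p z / (p z + q z) - k z / (k z + q z)) ^ 2 ∂μ)
          * √(∫ z, (max (p z) (k z) + q z) ^ 4 / (q z) ^ 2 ∂μ) := by
        simpa only [hw_sq] using integral_abs_mul_le_sqrt_mul_sqrt hr hw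
    _ ≤ √(2 * ε) * √(∫ z, (max (p z) (k z) + q z) ^ 4 / (q z) ^ 2 ∂μ) := by gcongr

theorem tv_type_bound {X : Type*} [MeasurableSpace X]
    (μ : Measure (X × X)) [IsProbabilityMeasure μ]
    (p k q : X × X → ℝ) (hp : Measurable p) (hk : Measurable k) (hq : Measurable q)
    (hp_pos : ∀ z, 0 < p z) (hk_pos : ∀ z, 0 < k z) (hq_pos : ∀ z, 0 < q z)
    (ε : ℝ)
    (hrisk_int : Integrable
      (fun z => (p z / (p z + q z) - k z / (k z + q z)) ^ 2) μ)
    (hw_int : Integrable (fun z => (max (p z) (k z) + q z) ^ 4 / (q z) ^ 2) μ)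
    (hrisk : ∫ z, (p z / (p z + q z) - k z / (k z + q z)) ^ 2 ∂μ ≤ 2 * ε) :
    ∫ z, |p z - k z| ∂μ
      ≤ Real.sqrt (2 * ε)
        * Real.sqrt (∫ z, (max (p z) (k z) + q z) ^ 4 / (q z) ^ 2 ∂μ) :=
  tv_type_bound_general μ p k q hp hk hq hp_pos hk_pos hq_pos ε hrisk_int hw_int hrisk
end

section
/- Suppose for all (x,x') in a measurable space with probability measure μ we have positive measurable functions p, k, q with |p − k|·q/(max{p,k}+q)² ≤ |r(p) − r(k)| pointwise, where r(t) = t/(t+q). If additionally k/q ∈ [1/c_q, c_q] and p/k ∈ [Δ_min, Δ_max] pointwise with c_q ≥ 1, Δ_max ≥ 1, and E_μ[(r(p) − r(k))²] ≤ 2ε, then E_μ|p − k| ≤ sqrt(2ε) · (2c_q+1)² · Δ_max · sqrt(E_μ[k²]). -/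
open MeasureTheory

theorem bounded_ratio_tv_bound {X : Type*} [MeasurableSpace X]
    (μ : Measure X) [IsProbabilityMeasure μ]
    (p k q : X → ℝ) (hp : Measurable p) (hk : Measurable k) (hq : Measurable q)
    (hp_pos : ∀ z, 0 < p z) (hk_pos : ∀ z, 0 < k z) (hq_pos : ∀ z, 0 < q z)
    (cq Δmin Δmax ε : ℝ) (hcq : 1 ≤ cq) (hΔmax : 1 ≤ Δmax)
    (hpt : ∀ z, |p z - k z| * q z / (max (p z) (k z) + q z) ^ 2
        ≤ |p z / (p z + q z) - k z / (k z + q z)|)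
    (hkq1 : ∀ z, 1 / cq ≤ k z / q z) (hkq2 : ∀ z, k z / q z ≤ cq)
    (hpk1 : ∀ z, Δmin ≤ p z / k z) (hpk2 : ∀ z, p z / k z ≤ Δmax)
    (hrisk_int : Integrable
      (fun z => (p z / (p z + q z) - k z / (k z + q z)) ^ 2) μ)
    (hk2_int : Integrable (fun z => (k z) ^ 2) μ)
    (hrisk : ∫ z, (p z / (p z + q z) - k z / (k z + q z)) ^ 2 ∂μ ≤ 2 * ε) :
    ∫ z, |p z - k z| ∂μ
      ≤ Real.sqrt (2 * ε) * (2 * cq + 1) ^ 2 * Δmax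
        * Real.sqrt (∫ z, (k z) ^ 2 ∂μ) := by
  set Δr : X → ℝ := fun z => p z / (p z + q z) - k z / (k z + q z) with hΔr_def
  set C : ℝ := (2 * cq + 1) ^ 2 * Δmax with hC_def
  have hC_pos : 0 < C := by positivity
  -- pointwise bound
  have key : ∀ z, |p z - k z| ≤ C * (|Δr z| * k z) := by
    intro z
    have ha := hp_pos z; have hb := hk_pos z; have hc := hq_pos z
    have hab : p z ≤ Δmax * k z := by
      have := (div_le_iff₀ hb).1 (hpk2 z); linarith
    have hbc : k z ≤ cq * q z := by
      have := (div_le_iff₀ hc).1 (hkq2 z); linarith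
    have hcb : q z ≤ cq * k z := by
      have h := (div_le_div_iff₀ (by positivity) hc).1 (hkq1 z); linarith
    have heq : Δr z = (p z - k z) * q z / ((p z + q z) * (k z + q z)) := by
      simp only [hΔr_def]; field_simp; ring
    have habs : |Δr z| * ((p z + q z) * (k z + q z)) = |p z - k z| * q z := by
      rw [heq, abs_div, abs_mul, abs_of_pos hc,
        abs_of_pos (by positivity : (0:ℝ) < (p z + q z) * (k z + q z))]
      field_simp
    -- weight bound : (p+q)(k+q) ≤ C * k * q
    have hw : (p z + q z) * (k z + q z) ≤ C * k z * q z := by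
      simp only [hC_def]
      nlinarith [mul_le_mul_of_nonneg_right hab hb.le,
        mul_le_mul_of_nonneg_right hab hc.le,
        mul_le_mul_of_nonneg_right hcb hc.le,
        mul_le_mul_of_nonneg_right hbc hb.le,
        mul_pos hb hc, sq_nonneg (cq - 1), sq_nonneg (Δmax - 1),
        mul_pos (mul_pos hb hc) (by positivity : (0:ℝ) < cq * Δmax)]
    have h2 : |p z - k z| * q z ≤ (C * (|Δr z| * k z)) * q z := by
      rw [← habs]
      calc |Δr z| * ((p z + q z) * (k z + q z)) ≤ |Δr z| * (C * k z * q z) :=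
            mul_le_mul_of_nonneg_left hw (abs_nonneg _)
        _ = (C * (|Δr z| * k z)) * q z := by ring
    exact le_of_mul_le_mul_right h2 hc
  -- measurability
  have hΔr_meas : Measurable Δr := ((hp.div (hp.add hq)).sub (hk.div (hk.add hq)))
  have hprod_meas : Measurable (fun z => |Δr z| * k z) := hΔr_meas.abs.mul hk
  -- integrability of |Δr| * k
  have hprod_int : Integrable (fun z => |Δr z| * k z) μ := by
    refine Integrable.mono' (hrisk_int.add hk2_int) hprod_meas.aestronglyMeasurable ?_
    filter_upwards with z
    rw [Real.norm_of_nonneg (mul_nonneg (abs_nonneg _) (hk_pos z).le)]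
    show |Δr z| * k z ≤ Δr z ^ 2 + k z ^ 2
    nlinarith [sq_nonneg (|Δr z| - k z), sq_abs (Δr z), abs_nonneg (Δr z), (hk_pos z).le]
  -- first step
  have step1 : ∫ z, |p z - k z| ∂μ ≤ C * ∫ z, |Δr z| * k z ∂μ := by
    rw [← integral_const_mul]
    refine integral_mono_of_nonneg (Filter.Eventually.of_forall fun z => abs_nonneg _)
      (hprod_int.const_mul C) (Filter.Eventually.of_forall key)
  -- Cauchy-Schwarz
  have hmem1 : MemLp (fun z => |Δr z|) 2 μ := by
    refine (memLp_two_iff_integrable_sq hΔr_meas.abs.aestronglyMeasurable).2 ?_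
    have : (fun z => |Δr z| ^ 2) = fun z => Δr z ^ 2 := by funext z; rw [sq_abs]
    rw [this]; exact hrisk_int
  have hmem2 : MemLp k 2 μ := by
    exact (memLp_two_iff_integrable_sq hk.aestronglyMeasurable).2 hk2_int
  have hconj : Real.HolderConjugate 2 2 := Real.HolderConjugate.two_two
  have hCS : ∫ z, |Δr z| * k z ∂μ
      ≤ (∫ z, |Δr z| ^ (2:ℝ) ∂μ) ^ ((1:ℝ)/2) * (∫ z, k z ^ (2:ℝ) ∂μ) ^ ((1:ℝ)/2) := by
    refine MeasureTheory.integral_mul_le_Lp_mul_Lq_of_nonneg hconj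
      (Filter.Eventually.of_forall fun z => abs_nonneg _)
      (Filter.Eventually.of_forall fun z => (hk_pos z).le) ?_ ?_
    · simpa [show ENNReal.ofReal (2:ℝ) = 2 by norm_num] using hmem1
    · simpa [show ENNReal.ofReal (2:ℝ) = 2 by norm_num] using hmem2
  have hrw1 : (∫ z, |Δr z| ^ (2:ℝ) ∂μ) = ∫ z, Δr z ^ 2 ∂μ := by
    congr 1; funext z
    rw [show ((2:ℝ)) = ((2:ℕ):ℝ) by norm_num, Real.rpow_natCast, sq_abs]
  have hrw2 : (∫ z, k z ^ (2:ℝ) ∂μ) = ∫ z, k z ^ 2 ∂μ := by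
    congr 1; funext z
    rw [show ((2:ℝ)) = ((2:ℕ):ℝ) by norm_num, Real.rpow_natCast]
  have hint_sq_nonneg : 0 ≤ ∫ z, Δr z ^ 2 ∂μ :=
    integral_nonneg fun z => sq_nonneg _
  have hintk_nonneg : 0 ≤ ∫ z, k z ^ 2 ∂μ :=
    integral_nonneg fun z => sq_nonneg _
  have hCS' : ∫ z, |Δr z| * k z ∂μ
      ≤ Real.sqrt (∫ z, Δr z ^ 2 ∂μ) * Real.sqrt (∫ z, k z ^ 2 ∂μ) := by
    rw [Real.sqrt_eq_rpow, Real.sqrt_eq_rpow]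
    calc ∫ z, |Δr z| * k z ∂μ
        ≤ (∫ z, |Δr z| ^ (2:ℝ) ∂μ) ^ ((1:ℝ)/2) * (∫ z, k z ^ (2:ℝ) ∂μ) ^ ((1:ℝ)/2) := hCS
      _ = (∫ z, Δr z ^ 2 ∂μ) ^ ((1:ℝ)/2) * (∫ z, k z ^ 2 ∂μ) ^ ((1:ℝ)/2) := by
          rw [hrw1, hrw2]
  have hsqrt : Real.sqrt (∫ z, Δr z ^ 2 ∂μ) ≤ Real.sqrt (2 * ε) :=
    Real.sqrt_le_sqrt hrisk
  calc ∫ z, |p z - k z| ∂μ ≤ C * ∫ z, |Δr z| * k z ∂μ := step1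
    _ ≤ C * (Real.sqrt (∫ z, Δr z ^ 2 ∂μ) * Real.sqrt (∫ z, k z ^ 2 ∂μ)) :=
        mul_le_mul_of_nonneg_left hCS' hC_pos.le
    _ ≤ C * (Real.sqrt (2 * ε) * Real.sqrt (∫ z, k z ^ 2 ∂μ)) := by
        have := mul_le_mul_of_nonneg_right hsqrt (Real.sqrt_nonneg (∫ z, k z ^ 2 ∂μ))
        exact mul_le_mul_of_nonneg_left this hC_pos.le
    _ = Real.sqrt (2 * ε) * (2 * cq + 1) ^ 2 * Δmax * Real.sqrt (∫ z, k z ^ 2 ∂μ) := by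
        simp only [hC_def]; ring
end
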